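/- arXiv:2109.08400 — 3 statements merged into one kernel-verified Lean document; each statement's English description precedes it below -/
import Mathlib

section
/- Let p be a prime, n a positive integer, A a subset of G = ℤ_p × ℤ_{p^n}, and u ∈ G. Then u ∈ Z_A if and only if |H_A(u,t)| = |H_A(u,t')| for all t, t' ∈ ℤ_{p^n} with t' ≡ t (mod p^{n−1}). -/
open Complex Pointwise

/-- The inner product on `ℤ_p × ℤ_{p^n}`: `⟨u,v⟩ = p^(n-1)·u₁·v₁ + u₂·v₂` in `ℤ_{p^n}`. -/
def inn (p n : ℕ) (u v : ZMod p × ZMod (p ^ n)) : ZMod (p ^ n) :=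
  (p : ZMod (p ^ n)) ^ (n - 1) * (u.1.val : ZMod (p ^ n)) * (v.1.val : ZMod (p ^ n)) +
    u.2 * v.2

/-- The character `χ_g(h) = e^(2πi⟨g,h⟩/p^n)`. -/
noncomputable def chi (p n : ℕ) (g h : ZMod p × ZMod (p ^ n)) : ℂ :=
  Complex.exp (2 * Real.pi * Complex.I * ((inn p n g h).val : ℂ) / ((p : ℂ) ^ n))

/-- `χ_g(A) = Σ_{a ∈ A} χ_g(a)`. -/
noncomputable def chiSum (p n : ℕ) (g : ZMod p × ZMod (p ^ n))
    (A : Finset (ZMod p × ZMod (p ^ n))) : ℂ :=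
  ∑ a ∈ A, chi p n g a

/-- The zero set `Z_A = {g : χ_g(A) = 0}`. -/
def zeroSet (p n : ℕ) (A : Finset (ZMod p × ZMod (p ^ n))) :
    Set (ZMod p × ZMod (p ^ n)) :=
  {g | chiSum p n g A = 0}

/-- `(A,B)` is a spectral pair: `|A| = |B|` and `χ_{b-b'}(A) = 0` for distinct `b,b' ∈ B`. -/
def SpectralPair (p n : ℕ) (A B : Finset (ZMod p × ZMod (p ^ n))) : Prop :=
  A.card = B.card ∧ ∀ b ∈ B, ∀ b' ∈ B, b ≠ b' → chiSum p n (b - b') A = 0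

/-- `A` is a spectral set: some `B` makes `(A,B)` a spectral pair. -/
def SpectralSet (p n : ℕ) (A : Finset (ZMod p × ZMod (p ^ n))) : Prop :=
  ∃ B : Finset (ZMod p × ZMod (p ^ n)), SpectralPair p n A B

/-- `(A,T)` is a tiling pair: every `g` has a unique representation `g = a + t`, `a ∈ A`, `t ∈ T`. -/
def TilingPair (p n : ℕ) (A T : Finset (ZMod p × ZMod (p ^ n))) : Prop :=
  ∀ g : ZMod p × ZMod (p ^ n),
    ∃! x : (ZMod p × ZMod (p ^ n)) × (ZMod p × ZMod (p ^ n)),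
      x.1 ∈ A ∧ x.2 ∈ T ∧ g = x.1 + x.2

/-- `A` tiles `ℤ_p × ℤ_{p^n}` by translation. -/
def Tiles (p n : ℕ) (A : Finset (ZMod p × ZMod (p ^ n))) : Prop :=
  ∃ T : Finset (ZMod p × ZMod (p ^ n)), TilingPair p n A T

section AuxForMainTheorem
open Polynomial Finset

lemma sum_range_mul' {M : Type*} [AddCommMonoid M] (f : ℕ → M) (a b : ℕ) :
    ∑ k ∈ Finset.range (a * b), f k
      = ∑ j ∈ Finset.range b, ∑ r ∈ Finset.range a, f (r + j * a) := by
  induction b with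
  | zero => simp
  | succ b ih =>
      rw [Nat.mul_succ, Finset.sum_range_add, ih, Finset.sum_range_succ]
      congr 1
      exact Finset.sum_congr rfl fun r _ => congrArg f (by ring)

lemma key_inj {Q r r' j j' : ℕ} (h1 : r < Q) (h2 : r' < Q)
    (h : r + j * Q = r' + j' * Q) : r = r' ∧ j = j' := by
  have hr : r = r' := by
    have := congrArg (· % Q) h
    simpa [Nat.add_mul_mod_self_right, Nat.mod_eq_of_lt h1, Nat.mod_eq_of_lt h2] using this
  subst hr
  refine ⟨rfl, ?_⟩
  have hQ : 0 < Q := Nat.pos_of_ne_zero (by omega)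
  have : j * Q = j' * Q := by omega
  exact Nat.eq_of_mul_eq_mul_right hQ this

lemma main_equiv (p m : ℕ) (hp : p.Prime) {ζ : ℂ}
    (hζ : IsPrimitiveRoot ζ (p ^ (m + 1))) (d : ℕ → ℕ) :
    (∑ k ∈ Finset.range (p ^ (m + 1)), (d k : ℂ) * ζ ^ k) = 0 ↔
      ∀ r < p ^ m, ∀ j < p, ∀ j' < p, d (r + j * p ^ m) = d (r + j' * p ^ m) := by
  set Q := p ^ m with hQ
  have hQpos : 0 < Q := pow_pos hp.pos m
  have hNsplit : p ^ (m + 1) = Q * p := by rw [hQ, pow_succ]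
  have hω : IsPrimitiveRoot (ζ ^ Q) p :=
    hζ.pow (pow_pos hp.pos (m + 1)) hNsplit
  have hgeom : ∑ j ∈ Finset.range p, (ζ ^ Q) ^ j = 0 := hω.geom_sum_eq_zero hp.one_lt
  have hsplit : (∑ k ∈ Finset.range (p ^ (m + 1)), (d k : ℂ) * ζ ^ k)
      = ∑ j ∈ Finset.range p, ∑ r ∈ Finset.range Q,
          (d (r + j * Q) : ℂ) * (ζ ^ r * (ζ ^ Q) ^ j) := by
    rw [hNsplit, sum_range_mul']
    refine Finset.sum_congr rfl fun j _ => Finset.sum_congr rfl fun r _ => ?_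
    rw [pow_add, mul_comm j Q, pow_mul]
  constructor
  · intro hS r0 hr0 j0 hj0 j0' hj0'
    rw [hsplit] at hS
    suffices h : ∀ j < p, d (r0 + j * Q) = d (r0 + (p - 1) * Q) by
      rw [h j0 hj0, h j0' hj0']
    set q : ℚ[X] := ∑ j ∈ Finset.range (p - 1), ∑ r ∈ Finset.range Q,
        C ((d (r + j * Q) : ℚ) - (d (r + (p - 1) * Q) : ℚ)) * X ^ (r + j * Q) with hq
    have hT : ∑ j ∈ Finset.range p, ∑ r ∈ Finset.range Q,
        ((d (r + j * Q) : ℂ) - (d (r + (p - 1) * Q) : ℂ)) * (ζ ^ r * (ζ ^ Q) ^ j) = 0 := by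
      have h2 : ∑ j ∈ Finset.range p, ∑ r ∈ Finset.range Q,
          (d (r + (p - 1) * Q) : ℂ) * (ζ ^ r * (ζ ^ Q) ^ j) = 0 := by
        have heach : ∀ j ∈ Finset.range p,
            ∑ r ∈ Finset.range Q, (d (r + (p - 1) * Q) : ℂ) * (ζ ^ r * (ζ ^ Q) ^ j)
              = (ζ ^ Q) ^ j * ∑ r ∈ Finset.range Q, (d (r + (p - 1) * Q) : ℂ) * ζ ^ r := by
          intro j _
          rw [Finset.mul_sum]
          exact Finset.sum_congr rfl fun r _ => by ring
        rw [Finset.sum_congr rfl heach, ← Finset.sum_mul, hgeom, zero_mul]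
      simp only [sub_mul, Finset.sum_sub_distrib]
      rw [hS, h2, sub_zero]
    have haeval : (aeval ζ) q = 0 := by
      rw [hq]
      simp only [map_sum, map_mul, map_pow, aeval_C, aeval_X, map_sub, map_natCast]
      have hps : p - 1 + 1 = p := by omega
      have hsucc := Finset.sum_range_succ
        (fun j => ∑ r ∈ Finset.range Q,
          ((d (r + j * Q) : ℂ) - (d (r + (p - 1) * Q) : ℂ)) * (ζ ^ r * (ζ ^ Q) ^ j)) (p - 1)
      rw [hps] at hsucc
      rw [hsucc] at hT
      simp only [sub_self, zero_mul, Finset.sum_const_zero, add_zero] at hT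
      rw [← hT]
      refine Finset.sum_congr rfl fun j _ => Finset.sum_congr rfl fun r _ => ?_
      rw [pow_add, mul_comm j Q, pow_mul]
    have hq0 : q = 0 := by
      by_contra hne
      have hdvd : minpoly ℚ ζ ∣ q := minpoly.dvd ℚ ζ haeval
      have hdeg := Polynomial.natDegree_le_of_dvd hdvd hne
      have hmin : (minpoly ℚ ζ).natDegree = Q * (p - 1) := by
        rw [← cyclotomic_eq_minpoly_rat hζ (pow_pos hp.pos _), natDegree_cyclotomic,
          Nat.totient_prime_pow hp (Nat.succ_pos m)]
        simp [hQ]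
      have hdegq : q.natDegree ≤ Q * (p - 1) - 1 := by
        rw [hq]
        refine natDegree_sum_le_of_forall_le _ _ fun j hj => ?_
        refine natDegree_sum_le_of_forall_le _ _ fun r hr => ?_
        refine (natDegree_C_mul_X_pow_le _ _).trans ?_
        have h1 : r + j * Q < (j + 1) * Q := by
          have : (j + 1) * Q = j * Q + Q := by ring
          rw [this]
          exact Nat.add_lt_add_right (Finset.mem_range.mp hr) _ |>.trans_le (by omega)
        have h2 : (j + 1) * Q ≤ (p - 1) * Q :=
          Nat.mul_le_mul_right Q (by have := Finset.mem_range.mp hj; omega)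
        have h3 : r + j * Q < Q * (p - 1) := by
          rw [mul_comm Q (p - 1)]; exact h1.trans_le h2
        omega
      rw [hmin] at hdeg
      have : 0 < Q * (p - 1) := Nat.mul_pos hQpos (by have := hp.two_le; omega)
      omega
    intro j hjp
    rcases Nat.lt_or_ge j (p - 1) with hjlt | hjge
    · have hcoeff := congrArg (fun f => Polynomial.coeff f (r0 + j * Q)) hq0
      simp only [hq, Polynomial.finset_sum_coeff, Polynomial.coeff_C_mul,
        Polynomial.coeff_X_pow, Polynomial.coeff_zero] at hcoeff
      rw [Finset.sum_eq_single j (fun b hb hbj => Finset.sum_eq_zero fun r hr => by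
          rw [if_neg (fun hcon => hbj (key_inj hr0 (Finset.mem_range.mp hr) hcon).2.symm), mul_zero])
        (fun hj' => absurd (Finset.mem_range.mpr hjlt) hj')] at hcoeff
      rw [Finset.sum_eq_single r0 (fun r hr hrr => by
          rw [if_neg (fun hcon => hrr (key_inj hr0 (Finset.mem_range.mp hr) hcon).1.symm), mul_zero])
        (fun hr => absurd (Finset.mem_range.mpr hr0) hr)] at hcoeff
      rw [if_pos rfl, mul_one, sub_eq_zero] at hcoeff
      exact_mod_cast hcoeff
    · have : j = p - 1 := by omega
      rw [this]
  · intro h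
    rw [hsplit]
    have heach : ∀ j ∈ Finset.range p,
        ∑ r ∈ Finset.range Q, (d (r + j * Q) : ℂ) * (ζ ^ r * (ζ ^ Q) ^ j)
          = (ζ ^ Q) ^ j * ∑ r ∈ Finset.range Q, (d r : ℂ) * ζ ^ r := by
      intro j hj
      rw [Finset.mul_sum]
      refine Finset.sum_congr rfl fun r hr => ?_
      have := h r (Finset.mem_range.mp hr) j (Finset.mem_range.mp hj) 0 hp.pos
      simp only [zero_mul, add_zero] at this
      rw [this]; ring
    rw [Finset.sum_congr rfl heach, ← Finset.sum_mul, hgeom, zero_mul]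


lemma inn_comm (p n : ℕ) (u v : ZMod p × ZMod (p ^ n)) : inn p n u v = inn p n v u := by
  unfold inn; ring

lemma zmod_sum (N : ℕ) [NeZero N] {M : Type*} [AddCommMonoid M] (f : ZMod N → M) :
    ∑ t : ZMod N, f t = ∑ k ∈ Finset.range N, f (k : ZMod N) := by
  refine Finset.sum_nbij' (fun t => t.val) (fun k => (k : ZMod N)) ?_ ?_ ?_ ?_ ?_
  · intro t _; exact Finset.mem_range.mpr t.val_lt
  · intro k _; exact Finset.mem_univ _
  · intro t _
    show ((t.val : ℕ) : ZMod N) = t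
    rw [ZMod.natCast_val, ZMod.cast_id]
  · intro k hk; exact ZMod.val_natCast_of_lt (Finset.mem_range.mp hk)
  · intro t _
    exact congrArg f (show ((t.val : ℕ) : ZMod N) = t from by
      rw [ZMod.natCast_val, ZMod.cast_id]).symm


end AuxForMainTheorem

/-- Equi-distributed property: `u ∈ Z_A` iff `|H_A(u,t)| = |H_A(u,t')|` whenever
`t' ≡ t (mod p^(n-1))`. -/
theorem mem_zeroSet_iff_equidistributed (p n : ℕ) (hp : p.Prime) (hn : 1 ≤ n)
    (A : Finset (ZMod p × ZMod (p ^ n))) (u : ZMod p × ZMod (p ^ n)) :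
    u ∈ zeroSet p n A ↔
      ∀ t t' : ZMod (p ^ n),
        ZMod.castHom (pow_dvd_pow p (Nat.sub_le n 1)) (ZMod (p ^ (n - 1))) t' =
          ZMod.castHom (pow_dvd_pow p (Nat.sub_le n 1)) (ZMod (p ^ (n - 1))) t →
        (A.filter fun x => inn p n x u = t).card =
          (A.filter fun x => inn p n x u = t').card := by
  haveI hN0 : NeZero (p ^ n) := ⟨(pow_pos hp.pos n).ne'⟩
  haveI hQ0 : NeZero (p ^ (n - 1)) := ⟨(pow_pos hp.pos _).ne'⟩
  have hm : n - 1 + 1 = n := by omega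
  have hQpos : 0 < p ^ (n - 1) := pow_pos hp.pos _
  have hNQ : p ^ n = p ^ (n - 1) * p := by rw [← pow_succ, hm]
  set ζ : ℂ := Complex.exp (2 * Real.pi * Complex.I / ((p ^ n : ℕ) : ℂ)) with hζdef
  have hζ : IsPrimitiveRoot ζ (p ^ n) :=
    Complex.isPrimitiveRoot_exp (p ^ n) (NeZero.ne _)
  set c : ZMod (p ^ n) → ℕ := fun t => (A.filter fun x => inn p n x u = t).card with hc
  have hchi : ∀ a, chi p n u a = ζ ^ (inn p n u a).val := by
    intro a
    rw [chi, hζdef, ← Complex.exp_nat_mul]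
    congr 1
    have hpn : ((p : ℂ)) ^ n = ((p ^ n : ℕ) : ℂ) := by push_cast; ring
    rw [hpn]; ring
  have hchisum : chiSum p n u A = ∑ t : ZMod (p ^ n), (c t : ℂ) * ζ ^ t.val := by
    rw [chiSum, ← Finset.sum_fiberwise A (fun a => inn p n a u) (chi p n u)]
    refine Finset.sum_congr rfl fun t _ => ?_
    calc ∑ a ∈ A.filter (fun a => inn p n a u = t), chi p n u a
        = ∑ _a ∈ A.filter (fun a => inn p n a u = t), ζ ^ t.val :=
          Finset.sum_congr rfl fun a ha => by
            rw [hchi, inn_comm, (Finset.mem_filter.mp ha).2]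
      _ = (c t : ℂ) * ζ ^ t.val := by rw [Finset.sum_const, nsmul_eq_mul]
  have hzsum : ∑ t : ZMod (p ^ n), (c t : ℂ) * ζ ^ t.val
      = ∑ k ∈ Finset.range (p ^ n), (c ((k : ZMod (p ^ n))) : ℂ) * ζ ^ k := by
    rw [zmod_sum]
    exact Finset.sum_congr rfl fun k hk => by
      rw [ZMod.val_natCast_of_lt (Finset.mem_range.mp hk)]
  have hζ' : IsPrimitiveRoot ζ (p ^ (n - 1 + 1)) := by rw [hm]; exact hζ
  have hmain := main_equiv p (n - 1) hp hζ' (fun k => c (k : ZMod (p ^ n)))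
  rw [hm] at hmain
  have hπ : ∀ t : ZMod (p ^ n),
      ZMod.castHom (pow_dvd_pow p (Nat.sub_le n 1)) (ZMod (p ^ (n - 1))) t
        = ((t.val : ℕ) : ZMod (p ^ (n - 1))) := by
    intro t
    conv_lhs => rw [← (show ((t.val : ℕ) : ZMod (p ^ n)) = t from by
      rw [ZMod.natCast_val, ZMod.cast_id])]
    rw [map_natCast]
  have hbridge : (∀ r < p ^ (n - 1), ∀ j < p, ∀ j' < p,
      c ((r + j * p ^ (n - 1) : ℕ) : ZMod (p ^ n))
        = c ((r + j' * p ^ (n - 1) : ℕ) : ZMod (p ^ n))) ↔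
      (∀ t t' : ZMod (p ^ n),
        ZMod.castHom (pow_dvd_pow p (Nat.sub_le n 1)) (ZMod (p ^ (n - 1))) t' =
          ZMod.castHom (pow_dvd_pow p (Nat.sub_le n 1)) (ZMod (p ^ (n - 1))) t →
        c t = c t') := by
    constructor
    · intro h t t' hcast
      rw [hπ, hπ, ZMod.natCast_eq_natCast_iff] at hcast
      have hr' : t'.val % p ^ (n - 1) = t.val % p ^ (n - 1) := hcast
      have hjt : t.val / p ^ (n - 1) < p :=
        Nat.div_lt_of_lt_mul (lt_of_lt_of_eq t.val_lt hNQ)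
      have hjt' : t'.val / p ^ (n - 1) < p :=
        Nat.div_lt_of_lt_mul (lt_of_lt_of_eq t'.val_lt hNQ)
      have key := h (t.val % p ^ (n - 1)) (Nat.mod_lt _ hQpos)
        (t.val / p ^ (n - 1)) hjt (t'.val / p ^ (n - 1)) hjt'
      rw [Nat.mod_add_div'] at key
      rw [← hr', Nat.mod_add_div'] at key
      rwa [ZMod.natCast_val, ZMod.cast_id, ZMod.natCast_val, ZMod.cast_id] at key
    · intro h r hr j hj j' hj'
      refine h _ _ ?_
      rw [map_natCast, map_natCast, ZMod.natCast_eq_natCast_iff']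
      simp [Nat.add_mul_mod_self_right]
  constructor
  · intro hu
    have hu' : chiSum p n u A = 0 := hu
    rw [hchisum, hzsum] at hu'
    exact hbridge.mp (hmain.mp hu')
  · intro h
    show chiSum p n u A = 0
    rw [hchisum, hzsum]
    exact hmain.mpr (hbridge.mpr h)
end

section
/- Let p be a prime and n a positive integer. If A ⊆ ℤ_p × ℤ_{p^n} is a spectral set with |A| = p, then A tiles ℤ_p × ℤ_{p^n}. -/
open Complex Pointwise

/-!
Let `(A, B)` be a spectral pair with `|A| = |B| = p`, pick distinct `b, b' ∈ B` and put
`d = b - b'`. The `p` values `⟨d, a⟩`, `a ∈ A`, are exponents of a primitive `p^n`-th root of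
unity with vanishing sum, so `Φ_{p^n}` divides `∑_{a ∈ A} X^{⟨d, a⟩}`. As
`Φ_{p^n} = ∑_{i < p} X^{i p^(n-1)}` and the quotient has nonnegative coefficients summing to `1`,
the quotient is a monomial `X^c`: the values `⟨d, a⟩` are exactly `c + i p^(n-1)`, `i < p`.
So the homomorphism `g ↦ ⟨d, g⟩` maps `A` bijectively onto a coset of `p^(n-1) ℤ_{p^n}`, which
tiles `ℤ_{p^n}` with `{0, …, p^(n-1) - 1}`, and pulling this tiling back tiles `G` with `A`.
-/

open Polynomial

section Cyclotomic

variable {p : ℕ}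

theorem Polynomial.exists_eq_X_pow_of_coeff_nonneg_of_eval_one {Q : ℤ[X]}
    (h0 : ∀ k, 0 ≤ Q.coeff k) (h1 : Q.eval 1 = 1) : ∃ c, Q = X ^ c := by
  have hsum : ∑ k ∈ Q.support, Q.coeff k = 1 := by
    simpa [eval_eq_sum, Polynomial.sum_def] using h1
  have hcard : Q.support.card ≤ 1 := by
    have := Finset.card_nsmul_le_sum Q.support (fun k => Q.coeff k) 1 fun k hk => by
      have := h0 k; have := mem_support_iff.mp hk; omega
    simpa [hsum] using this
  have hQ : Q ≠ 0 := by rintro rfl; simp at h1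
  obtain ⟨c, x, -, rfl⟩ := card_support_eq_one.mp
    (le_antisymm hcard (Finset.card_pos.mpr (support_nonempty.mpr hQ)))
  simp only [eval_mul, eval_C, eval_pow, eval_X, one_pow, mul_one] at h1
  exact ⟨c, by simp [h1]⟩

theorem Polynomial.coeff_cyclotomic_prime_pow_mul_of_lt {R : Type*} [CommRing R] (hp : p.Prime)
    {m r : ℕ} (Q : R[X]) (hr : r < p ^ m) :
    (cyclotomic (p ^ (m + 1)) R * Q).coeff r = Q.coeff r := by
  obtain ⟨S, hS⟩ : ∃ S : R[X], cyclotomic (p ^ (m + 1)) R = 1 + X ^ p ^ m * S := by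
    rw [cyclotomic_prime_pow_eq_geom_sum hp]
    obtain ⟨k, hk⟩ : ∃ k, p = k + 1 := ⟨p - 1, by have := hp.pos; omega⟩
    refine ⟨∑ i ∈ Finset.range k, (X ^ p ^ m) ^ i, ?_⟩
    rw [hk, Finset.sum_range_succ', Finset.mul_sum, ← hk]
    simp [pow_succ', add_comm]
  rw [hS, add_mul, one_mul, coeff_add, mul_assoc, coeff_X_pow_mul', if_neg (by omega), add_zero]

theorem Polynomial.exists_eq_X_pow_mul_cyclotomic_of_dvd (hp : p.Prime) {m : ℕ} {P : ℤ[X]}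
    (h0 : ∀ k, 0 ≤ P.coeff k) (h1 : P.eval 1 = p) (hdeg : P.natDegree < p ^ (m + 1))
    (hdvd : cyclotomic (p ^ (m + 1)) ℤ ∣ P) : ∃ c, P = X ^ c * cyclotomic (p ^ (m + 1)) ℤ := by
  have := Fact.mk hp
  obtain ⟨Q, rfl⟩ := hdvd
  have hQ : Q ≠ 0 := by rintro rfl; exact hp.ne_zero (by simpa using h1.symm)
  have hQdeg : Q.natDegree < p ^ m := by
    rw [natDegree_mul (cyclotomic_ne_zero _ ℤ) hQ, natDegree_cyclotomic,
      Nat.totient_prime_pow_succ hp] at hdeg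
    have : p ^ (m + 1) = p ^ m * (p - 1) + p ^ m := by
      rw [← Nat.mul_add_one, Nat.sub_add_cancel hp.one_le, pow_succ]
    omega
  have hQ0 : ∀ k, 0 ≤ Q.coeff k := by
    intro k
    rcases lt_or_ge k (p ^ m) with hk | hk
    · rw [← coeff_cyclotomic_prime_pow_mul_of_lt hp Q hk]; exact h0 k
    · rw [coeff_eq_zero_of_natDegree_lt (by omega)]
  have hQ1 : Q.eval 1 = 1 := by
    rw [eval_mul, eval_one_cyclotomic_prime_pow] at h1
    exact (mul_eq_left₀ (by exact_mod_cast hp.ne_zero)).mp h1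
  obtain ⟨c, rfl⟩ := exists_eq_X_pow_of_coeff_nonneg_of_eval_one hQ0 hQ1
  exact ⟨c, mul_comm _ _⟩

theorem Polynomial.coeff_multiset_sum_map_X_pow {R : Type*} [Semiring R] (M : Multiset ℕ)
    (k : ℕ) : ((M.map fun s => (X : R[X]) ^ s).sum).coeff k = M.count k := by
  induction M using Multiset.induction_on with
  | empty => simp
  | cons s M ih =>
    simp only [Multiset.map_cons, Multiset.sum_cons, coeff_add, coeff_X_pow, ih,
      Multiset.count_cons]
    split_ifs <;> simp_all [add_comm]

theorem Multiset.exists_eq_map_range_of_sum_map_pow_eq_zero {K : Type*} [Field K] [CharZero K]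
    (hp : p.Prime) {m : ℕ} {ζ : K} (hζ : IsPrimitiveRoot ζ (p ^ (m + 1))) {M : Multiset ℕ}
    (hcard : card M = p) (hlt : ∀ s ∈ M, s < p ^ (m + 1)) (hsum : (M.map (ζ ^ ·)).sum = 0) :
    ∃ c, M = (range p).map (fun i => c + p ^ m * i) := by
  have hpos : 0 < p ^ (m + 1) := pow_pos hp.pos _
  set P : ℤ[X] := (M.map fun s => X ^ s).sum
  have hdvd : cyclotomic (p ^ (m + 1)) ℤ ∣ P := by
    rw [cyclotomic_eq_minpoly hζ hpos]
    refine minpoly.isIntegrallyClosed_dvd (hζ.isIntegral hpos) ?_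
    simpa [P, map_multiset_sum, Multiset.map_map, Function.comp_def] using hsum
  have hdeg : P.natDegree < p ^ (m + 1) := by
    refine Nat.lt_of_le_pred hpos (natDegree_le_iff_coeff_eq_zero.mpr fun k hk => ?_)
    rw [coeff_multiset_sum_map_X_pow, Nat.cast_eq_zero, count_eq_zero]
    exact fun hk' => by have := hlt k hk'; rw [Nat.pred_eq_sub_one] at hk; omega
  obtain ⟨c, hc⟩ := exists_eq_X_pow_mul_cyclotomic_of_dvd hp
    (fun k => by rw [coeff_multiset_sum_map_X_pow]; positivity)
    (by simp [P, eval_multisetSum, hcard]) hdeg hdvd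
  refine ⟨c, ext.mpr fun k => ?_⟩
  have hP' : P = (((range p).map fun i => c + p ^ m * i).map fun s => X ^ s).sum := by
    rw [hc, cyclotomic_prime_pow_eq_geom_sum hp, Finset.mul_sum, Finset.sum_eq_multiset_sum]
    simp [pow_add, pow_mul]
  have := congrArg (coeff · k) hP'
  simp only [P, coeff_multiset_sum_map_X_pow] at this
  exact_mod_cast this

end Cyclotomic

def IsTilingPair {G : Type*} [Add G] (A T : Set G) : Prop :=
  ∀ g, ∃! x : G × G, x.1 ∈ A ∧ x.2 ∈ T ∧ g = x.1 + x.2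

theorem IsTilingPair.preimage {G H : Type*} [AddGroup G] [AddGroup H] (φ : G →+ H) {A : Set G}
    {R : Set H} (hinj : Set.InjOn φ A) (h : IsTilingPair (φ '' A) R) :
    IsTilingPair A (φ ⁻¹' R) := by
  intro g
  obtain ⟨⟨_, r⟩, ⟨⟨a, ha, rfl⟩, hr, hφg⟩, huniq⟩ := h (φ g)
  have hφt : φ (-a + g) = r := by rw [map_add, map_neg, hφg, neg_add_cancel_left]
  refine ⟨(a, -a + g), ⟨ha, by simpa [hφt] using hr, by simp⟩, ?_⟩
  rintro ⟨a', t'⟩ ⟨ha', ht', rfl⟩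
  have hφa : φ a' = φ a :=
    congrArg Prod.fst (huniq (φ a', φ t') ⟨⟨a', ha', rfl⟩, ht', map_add ..⟩)
  obtain rfl := hinj ha' ha hφa
  simp

theorem ZMod.isTilingPair_image_Iio {N a b : ℕ} [NeZero N] (hN : N = a * b) (c : ℕ) :
    IsTilingPair ((fun i : ℕ => ((c + a * i : ℕ) : ZMod N)) '' Set.Iio b)
      {r : ZMod N | r.val < a} := by
  subst hN
  have ha : 0 < a := Nat.pos_of_mul_pos_right (NeZero.pos (a * b))
  have hb : 0 < b := Nat.pos_of_mul_pos_left (NeZero.pos (a * b))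
  intro y
  obtain ⟨v, hv, rfl⟩ : ∃ v < a * b, y = c + (v : ZMod (a * b)) :=
    ⟨(y - c).val, ZMod.val_lt _, by simp⟩
  have hmod : ((v % a : ℕ) : ZMod (a * b)).val = v % a :=
    ZMod.val_natCast_of_lt ((Nat.mod_lt v ha).trans_le (Nat.le_mul_of_pos_right a hb))
  refine ⟨(((c + a * (v / a) : ℕ) : ZMod (a * b)), ((v % a : ℕ) : ZMod (a * b))),
    ⟨⟨v / a, Nat.div_lt_of_lt_mul hv, rfl⟩, ?_, ?_⟩, ?_⟩
  · simpa [hmod] using Nat.mod_lt v ha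
  · conv_lhs => rw [← Nat.div_add_mod v a]
    push_cast; ring
  rintro ⟨_, r⟩ ⟨⟨j, hj, rfl⟩, hr, hsum⟩
  simp only [Set.mem_Iio, Set.mem_ofPred_eq] at hj hr hsum ⊢
  have hlt : r.val + a * j < a * b := by nlinarith
  have hvj : v = r.val + a * j := by
    rw [← ZMod.val_natCast_of_lt hv, ← ZMod.val_natCast_of_lt hlt]
    congr 1
    push_cast at hsum ⊢
    rw [ZMod.natCast_zmod_val]
    linear_combination hsum
  obtain ⟨hdiv, hmod'⟩ := (Nat.div_mod_unique ha).mpr ⟨hvj.symm, hr⟩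
  rw [hdiv, hmod', ZMod.natCast_zmod_val]

theorem ZMod.natCast_pow_pred_mul_self_eq_zero (p n : ℕ) :
    (p : ZMod (p ^ n)) ^ (n - 1) * p = 0 := by
  rcases n with _ | n
  · exact Subsingleton.elim (h := ZMod.subsingleton_iff.mpr (pow_zero p)) _ _
  · rw [Nat.add_sub_cancel, ← pow_succ, ← Nat.cast_pow, ZMod.natCast_self]

theorem ZMod.natCast_pow_pred_mul_natCast_mod (p n k : ℕ) :
    (p : ZMod (p ^ n)) ^ (n - 1) * ((k % p : ℕ) : ZMod (p ^ n)) =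
      (p : ZMod (p ^ n)) ^ (n - 1) * k := by
  conv_rhs => rw [← Nat.mod_add_div k p]
  push_cast
  linear_combination (-((k / p : ℕ) : ZMod (p ^ n))) * ZMod.natCast_pow_pred_mul_self_eq_zero p n

section Inner

variable {p n : ℕ}

theorem inn_add_right [NeZero p] (d u v : ZMod p × ZMod (p ^ n)) :
    inn p n d (u + v) = inn p n d u + inn p n d v := by
  have h := ZMod.natCast_pow_pred_mul_natCast_mod p n (u.1.val + v.1.val)
  simp only [inn, Prod.fst_add, Prod.snd_add, ZMod.val_add]
  push_cast at h ⊢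
  linear_combination (d.1.val : ZMod (p ^ n)) * h

def innHom (p n : ℕ) [NeZero p] (d : ZMod p × ZMod (p ^ n)) :
    ZMod p × ZMod (p ^ n) →+ ZMod (p ^ n) :=
  AddMonoidHom.mk' (inn p n d) (inn_add_right d)

theorem chi_eq_pow (g h : ZMod p × ZMod (p ^ n)) :
    chi p n g h = exp (2 * Real.pi * I / (p ^ n : ℕ)) ^ (inn p n g h).val := by
  rw [chi, ← Complex.exp_nat_mul]
  push_cast
  ring_nf

theorem SpectralSet.exists_chiSum_eq_zero {A : Finset (ZMod p × ZMod (p ^ n))}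
    (hA : SpectralSet p n A) (hcard : 1 < A.card) : ∃ d, chiSum p n d A = 0 := by
  obtain ⟨B, hAB, hB⟩ := hA
  obtain ⟨b, hb, b', hb', hbb'⟩ := Finset.one_lt_card.mp (hAB ▸ hcard)
  exact ⟨b - b', hB b hb b' hb' hbb'⟩

theorem injOn_inn_and_exists_image_inn_eq (hp : p.Prime) {m : ℕ}
    {A : Finset (ZMod p × ZMod (p ^ (m + 1)))} (hcard : A.card = p)
    {d : ZMod p × ZMod (p ^ (m + 1))} (hd : chiSum p (m + 1) d A = 0) :
    Set.InjOn (inn p (m + 1) d) A ∧ ∃ c : ℕ, inn p (m + 1) d '' A =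
      (fun i : ℕ => ((c + p ^ m * i : ℕ) : ZMod (p ^ (m + 1)))) '' Set.Iio p := by
  have := NeZero.mk hp.ne_zero
  have hζ := Complex.isPrimitiveRoot_exp (p ^ (m + 1)) (pow_ne_zero _ hp.ne_zero)
  obtain ⟨c, hc⟩ := Multiset.exists_eq_map_range_of_sum_map_pow_eq_zero hp hζ
    (M := A.val.map fun a => (inn p (m + 1) d a).val) (by simpa using hcard)
    (fun s hs => by obtain ⟨a, -, rfl⟩ := Multiset.mem_map.mp hs; exact ZMod.val_lt _)
    (by simpa only [chiSum, chi_eq_pow, Finset.sum_eq_multiset_sum, Multiset.map_map,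
      Function.comp_def] using hd)
  refine ⟨fun a ha a' ha' h => ?_, c, ?_⟩
  · refine Multiset.inj_on_of_nodup_map (f := fun a => (inn p (m + 1) d a).val) ?_
      a ha a' ha' (congrArg ZMod.val h)
    rw [hc]
    exact (Multiset.nodup_range p).map fun i j hij => by
      simpa [hp.ne_zero] using hij
  · have hval : (fun a => (inn p (m + 1) d a).val) '' A =
        (fun i => c + p ^ m * i) '' Set.Iio p := by
      ext s
      simpa using congrArg (s ∈ ·) hc
    calc inn p (m + 1) d '' A
        = Nat.cast '' ((fun a => (inn p (m + 1) d a).val) '' A) := by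
          rw [Set.image_image]; simp only [ZMod.natCast_zmod_val]
      _ = _ := by rw [hval, Set.image_image]

end Inner

/-- A spectral set of size `p` is a tile. -/
theorem tile_of_spectral_card_p (p n : ℕ) (hp : p.Prime) (hn : 1 ≤ n)
    (A : Finset (ZMod p × ZMod (p ^ n))) (hA : SpectralSet p n A) (hcard : A.card = p) :
    Tiles p n A := by
  have := NeZero.mk hp.ne_zero
  obtain ⟨m, rfl⟩ : ∃ m, n = m + 1 := ⟨n - 1, by omega⟩
  obtain ⟨d, hd⟩ := hA.exists_chiSum_eq_zero (hcard.symm ▸ hp.one_lt)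
  obtain ⟨hinj, c, himage⟩ := injOn_inn_and_exists_image_inn_eq hp hcard hd
  have hdigits := ZMod.isTilingPair_image_Iio (pow_succ p m) c
  rw [← himage] at hdigits
  have hT := hdigits.preimage (innHom p (m + 1) d) hinj
  classical
  refine ⟨(innHom p (m + 1) d ⁻¹' {r | r.val < p ^ m}).toFinset, ?_⟩
  rw [← Set.coe_toFinset (innHom p (m + 1) d ⁻¹' _)] at hT
  exact hT
end

section
/- Let p be a prime, n a positive integer, and t an integer with 2 ≤ t ≤ n. Let (A,T) be a tiling pair of G = ℤ_p × ℤ_{p^n} with |A| = p^t, and set I = {i ∈ {0,1,…,n−1} : (0, p^i) ∈ Z_A}. Then t − 1 ≤ |I| ≤ t. -/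
open Complex Pointwise

/-! The characters at `(0, p^i)` see only second coordinates: `χ_{(0,p^i)}(S)` is the mask
polynomial `∑_{s ∈ S} X^{s₂}` evaluated at a primitive `p^(n-i)`-th root of unity. Each such
zero puts a factor `Φ_{p^(n-i)}` into the mask polynomial, and since `Φ_{p^k}(1) = p`,
evaluation at `1` gives `p^|I_S| ∣ |S|`; for `S = A` this is `|I| ≤ t`. For a tiling pair,
`χ_g(A) χ_g(T) = χ_g(G) = 0` for `g ≠ 0`, so every `i < n` lies in `I_A` or `I_T`, and
`|I_T| ≤ n + 1 - t` because `|A| |T| = p^(n+1)`. -/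

open Polynomial

section character

variable {p n : ℕ} [NeZero p]

/-- `ZMod.val` is not additive, but the factor `p^(n-1)` absorbs its carries. -/
theorem natCast_pow_pred_mul_val_add (x y : ZMod p) :
    ((p ^ (n - 1) * (x + y).val : ℕ) : ZMod (p ^ n)) =
      ((p ^ (n - 1) * (x.val + y.val) : ℕ) : ZMod (p ^ n)) := by
  have hmod : (x + y).val ≡ x.val + y.val [MOD p] := by
    rw [ZMod.val_add]; exact Nat.mod_modEq _ _
  have hdvd : p ^ n ∣ p ^ (n - 1) * p := by
    rw [← pow_succ]; exact pow_dvd_pow _ (by omega)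
  exact (ZMod.natCast_eq_natCast_iff _ _ _).2 ((Nat.ModEq.mul_left' _ hmod).of_dvd hdvd)

def innRight (g : ZMod p × ZMod (p ^ n)) : ZMod p × ZMod (p ^ n) →+ ZMod (p ^ n) where
  toFun := inn p n g
  map_zero' := by simp [inn]
  map_add' a b := by
    have h := natCast_pow_pred_mul_val_add (n := n) a.1 b.1
    push_cast at h
    simp only [inn, Prod.fst_add, Prod.snd_add]
    linear_combination (g.1.val : ZMod (p ^ n)) * h

theorem chi_eq_stdAddChar (g h : ZMod p × ZMod (p ^ n)) :
    chi p n g h = ZMod.stdAddChar (inn p n g h) := by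
  rw [chi, ZMod.stdAddChar_apply, ZMod.toCircle_apply]
  push_cast
  ring_nf

noncomputable def chiChar (g : ZMod p × ZMod (p ^ n)) : AddChar (ZMod p × ZMod (p ^ n)) ℂ :=
  ZMod.stdAddChar.compAddMonoidHom (innRight g)

theorem chiChar_apply (g h : ZMod p × ZMod (p ^ n)) : chiChar g h = chi p n g h := by
  rw [chi_eq_stdAddChar]; rfl

theorem sum_chi_eq_zero {g : ZMod p × ZMod (p ^ n)} (hg : g.2 ≠ 0) :
    ∑ h, chi p n g h = 0 := by
  have hne : chiChar g ≠ 1 := by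
    intro h1
    have h01 := DFunLike.congr_fun h1 ((0 : ZMod p), (1 : ZMod (p ^ n)))
    rw [AddChar.one_apply, chiChar_apply, chi_eq_stdAddChar,
      ← (ZMod.stdAddChar (N := p ^ n)).map_zero_eq_one, ZMod.injective_stdAddChar.eq_iff] at h01
    exact hg (by simpa [inn] using h01)
  simpa only [chiChar_apply] using AddChar.sum_eq_zero_of_ne_one hne

end character

section tiling

variable {p n : ℕ} [NeZero p] {A T : Finset (ZMod p × ZMod (p ^ n))}

theorem TilingPair.sum_add {M : Type*} [AddCommMonoid M] (hAT : TilingPair p n A T)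
    (f : ZMod p × ZMod (p ^ n) → M) : ∑ x ∈ A ×ˢ T, f (x.1 + x.2) = ∑ g, f g := by
  refine Finset.sum_bij (fun x _ => x.1 + x.2) (fun _ _ => Finset.mem_univ _) ?_ ?_
    (fun _ _ => rfl)
  · intro x hx y hy hxy
    rw [Finset.mem_product] at hx hy
    obtain ⟨z, -, hz⟩ := hAT (x.1 + x.2)
    rw [hz x ⟨hx.1, hx.2, rfl⟩, hz y ⟨hy.1, hy.2, hxy⟩]
  · intro g _
    obtain ⟨x, ⟨hxA, hxT, hg⟩, -⟩ := hAT g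
    exact ⟨x, Finset.mem_product.2 ⟨hxA, hxT⟩, hg.symm⟩

theorem TilingPair.card_mul_card (hAT : TilingPair p n A T) :
    A.card * T.card = p ^ (n + 1) := by
  have h := hAT.sum_add (fun _ => 1)
  simp only [Finset.sum_const, smul_eq_mul, mul_one, Finset.card_product, Finset.card_univ,
    Fintype.card_prod, ZMod.card] at h
  rw [h, pow_succ']

theorem TilingPair.chiSum_mul_chiSum_eq_zero (hAT : TilingPair p n A T)
    {g : ZMod p × ZMod (p ^ n)} (hg : g.2 ≠ 0) : chiSum p n g A * chiSum p n g T = 0 := by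
  rw [chiSum, chiSum, Finset.sum_mul_sum, ← Finset.sum_product', ← sum_chi_eq_zero hg,
    ← hAT.sum_add]
  refine Finset.sum_congr rfl fun x _ => ?_
  simp only [← chiChar_apply, AddChar.map_add_eq_mul]

end tiling

/-- Distinct cyclotomic polynomials are coprime only over `ℚ`; monicity brings the
divisibility back to `ℤ`. -/
theorem prod_cyclotomic_dvd {ι : Type*} {s : Finset ι} {k : ι → ℕ} (hk : Set.InjOn k s)
    {f : ℤ[X]} (hf : ∀ i ∈ s, cyclotomic (k i) ℤ ∣ f) :
    ∏ i ∈ s, cyclotomic (k i) ℤ ∣ f := by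
  have hmonic : (∏ i ∈ s, cyclotomic (k i) ℤ).Monic :=
    monic_prod_of_monic _ _ fun i _ => cyclotomic.monic _ _
  rw [← map_dvd_map (Int.castRingHom ℚ) Int.cast_injective hmonic, Polynomial.map_prod]
  simp only [map_cyclotomic_int]
  refine Finset.prod_dvd_of_coprime (fun i hi j hj hij => ?_) fun i hi => ?_
  · exact cyclotomic.isCoprime_rat fun h => hij (hk hi hj h)
  · rw [← map_cyclotomic_int]
    exact Polynomial.map_dvd _ (hf i hi)

section maskPoly

variable {p n : ℕ}

noncomputable def maskPoly (S : Finset (ZMod p × ZMod (p ^ n))) : ℤ[X] :=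
  ∑ a ∈ S, X ^ a.2.val

theorem eval_one_maskPoly (S : Finset (ZMod p × ZMod (p ^ n))) :
    (maskPoly S).eval 1 = S.card := by
  simp [maskPoly, eval_finsetSum]

theorem aeval_maskPoly [NeZero p] (S : Finset (ZMod p × ZMod (p ^ n))) (i : ℕ) :
    aeval (ZMod.stdAddChar (1 : ZMod (p ^ n)) ^ p ^ i) (maskPoly S) =
      chiSum p n ((0 : ZMod p), (p : ZMod (p ^ n)) ^ i) S := by
  rw [maskPoly, map_sum, chiSum]
  refine Finset.sum_congr rfl fun a _ => ?_
  have hinn : inn p n ((0 : ZMod p), (p : ZMod (p ^ n)) ^ i) a = (p ^ i * a.2.val) • 1 := by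
    simp [inn]
  rw [map_pow, aeval_X, chi_eq_stdAddChar, hinn, AddChar.map_nsmul_eq_pow, pow_mul]

theorem cyclotomic_dvd_maskPoly (hp : p.Prime) {S : Finset (ZMod p × ZMod (p ^ n))} {i : ℕ}
    (hi : i < n) (hS : chiSum p n ((0 : ZMod p), (p : ZMod (p ^ n)) ^ i) S = 0) :
    cyclotomic (p ^ (n - i)) ℤ ∣ maskPoly S := by
  have : NeZero p := ⟨hp.ne_zero⟩
  have hζ : IsPrimitiveRoot (ZMod.stdAddChar (1 : ZMod (p ^ n))) (p ^ n) := by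
    have h1 := ZMod.stdAddChar_coe (N := p ^ n) 1
    push_cast at h1
    rw [h1, mul_one]
    exact_mod_cast Complex.isPrimitiveRoot_exp (p ^ n) (NeZero.ne _)
  have hpos : 0 < p ^ (n - i) := pow_pos hp.pos _
  have hprim : IsPrimitiveRoot (ZMod.stdAddChar (1 : ZMod (p ^ n)) ^ p ^ i) (p ^ (n - i)) :=
    hζ.pow (pow_pos hp.pos n) (by rw [← pow_add]; congr 1; omega)
  rw [cyclotomic_eq_minpoly hprim hpos]
  exact minpoly.isIntegrallyClosed_dvd (hprim.isIntegral hpos) (by rw [aeval_maskPoly, hS])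

end maskPoly

open Classical in
noncomputable def zeroIndices (p n : ℕ) (S : Finset (ZMod p × ZMod (p ^ n))) : Finset ℕ :=
  {i ∈ Finset.range n | ((0 : ZMod p), (p : ZMod (p ^ n)) ^ i) ∈ zeroSet p n S}

theorem mem_zeroIndices {p n i : ℕ} {S : Finset (ZMod p × ZMod (p ^ n))} :
    i ∈ zeroIndices p n S ↔
      i < n ∧ chiSum p n ((0 : ZMod p), (p : ZMod (p ^ n)) ^ i) S = 0 := by
  simp only [zeroIndices, Finset.mem_filter, Finset.mem_range]
  rfl

theorem pow_card_zeroIndices_dvd_card {p n : ℕ} (hp : p.Prime)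
    (S : Finset (ZMod p × ZMod (p ^ n))) :
    p ^ (zeroIndices p n S).card ∣ S.card := by
  have hdvd := prod_cyclotomic_dvd (s := zeroIndices p n S) (k := fun i => p ^ (n - i))
    (fun i hi j hj h => by
      have := Nat.pow_right_injective hp.two_le h
      have := (mem_zeroIndices.1 hi).1
      have := (mem_zeroIndices.1 hj).1
      omega)
    (fun i hi => cyclotomic_dvd_maskPoly hp (mem_zeroIndices.1 hi).1 (mem_zeroIndices.1 hi).2)
  have hΦ : ∀ i ∈ zeroIndices p n S, (cyclotomic (p ^ (n - i)) ℤ).eval 1 = p := by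
    intro i hi
    have hi : i < n := (mem_zeroIndices.1 hi).1
    obtain ⟨k, hk⟩ : ∃ k, n - i = k + 1 := ⟨n - i - 1, by omega⟩
    have : Fact p.Prime := ⟨hp⟩
    rw [hk, eval_one_cyclotomic_prime_pow]
  have := eval_dvd (x := 1) hdvd
  rw [eval_prod, Finset.prod_congr rfl hΦ, Finset.prod_const, eval_one_maskPoly] at this
  exact_mod_cast this

theorem TilingPair.le_card_zeroIndices_add_card_zeroIndices {p n : ℕ} (hp : 1 < p)
    {A T : Finset (ZMod p × ZMod (p ^ n))} (hAT : TilingPair p n A T) :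
    n ≤ (zeroIndices p n A).card + (zeroIndices p n T).card := by
  have : NeZero p := ⟨by omega⟩
  have hcover : Finset.range n ⊆ zeroIndices p n A ∪ zeroIndices p n T := by
    intro i hi
    have hi : i < n := Finset.mem_range.1 hi
    have hpi : (p : ZMod (p ^ n)) ^ i ≠ 0 := by
      rw [← Nat.cast_pow, Ne, ZMod.natCast_eq_zero_iff, Nat.pow_dvd_pow_iff_le_right hp]
      omega
    rcases mul_eq_zero.1 (hAT.chiSum_mul_chiSum_eq_zero (g := ((0 : ZMod p), _)) hpi) with h | h
    · exact Finset.mem_union_left _ (mem_zeroIndices.2 ⟨hi, h⟩)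
    · exact Finset.mem_union_right _ (mem_zeroIndices.2 ⟨hi, h⟩)
  calc n = (Finset.range n).card := (Finset.card_range n).symm
    _ ≤ _ := (Finset.card_le_card hcover).trans (Finset.card_union_le _ _)

theorem card_zeroSet_indices_of_tilingPair_general (p n t : ℕ) (hp : p.Prime)
    (A T : Finset (ZMod p × ZMod (p ^ n))) (hAT : TilingPair p n A T)
    (hcard : A.card = p ^ t) :
    t - 1 ≤ {i : ℕ | i < n ∧
        ((0 : ZMod p), (p : ZMod (p ^ n)) ^ i) ∈ zeroSet p n A}.ncard ∧
      {i : ℕ | i < n ∧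
        ((0 : ZMod p), (p : ZMod (p ^ n)) ^ i) ∈ zeroSet p n A}.ncard ≤ t := by
  have : NeZero p := ⟨hp.ne_zero⟩
  have hI : {i : ℕ | i < n ∧ ((0 : ZMod p), (p : ZMod (p ^ n)) ^ i) ∈ zeroSet p n A} =
      zeroIndices p n A :=
    Set.ext fun _ => mem_zeroIndices.symm
  have hA : p ^ (zeroIndices p n A).card ∣ p ^ t := hcard ▸ pow_card_zeroIndices_dvd_card hp A
  have hT : p ^ (t + (zeroIndices p n T).card) ∣ p ^ (n + 1) := by
    rw [pow_add, ← hcard, ← hAT.card_mul_card]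
    exact mul_dvd_mul_left _ (pow_card_zeroIndices_dvd_card hp T)
  rw [Nat.pow_dvd_pow_iff_le_right hp.one_lt] at hA hT
  have hcover := hAT.le_card_zeroIndices_add_card_zeroIndices hp.one_lt
  rw [hI, Set.ncard_coe_finset]
  omega

/-- For a tiling pair `(A,T)` with `|A| = p^t`, the set
`I = {i < n : (0, p^i) ∈ Z_A}` satisfies `t - 1 ≤ |I| ≤ t`. -/
theorem card_zeroSet_indices_of_tilingPair (p n t : ℕ) (hp : p.Prime) (hn : 1 ≤ n)
    (ht2 : 2 ≤ t) (htn : t ≤ n)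
    (A T : Finset (ZMod p × ZMod (p ^ n))) (hAT : TilingPair p n A T)
    (hcard : A.card = p ^ t) :
    t - 1 ≤ {i : ℕ | i < n ∧
        ((0 : ZMod p), (p : ZMod (p ^ n)) ^ i) ∈ zeroSet p n A}.ncard ∧
      {i : ℕ | i < n ∧
        ((0 : ZMod p), (p : ZMod (p ^ n)) ^ i) ∈ zeroSet p n A}.ncard ≤ t :=
  card_zeroSet_indices_of_tilingPair_general p n t hp A T hAT hcard
end
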